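/- Let f ∈ C²(I) be strictly monotone with nowhere vanishing derivative. Then the quasiarithmetic mean A_f(x_1,…,x_p) = f^{-1}((f(x_1)+⋯+f(x_p))/p) is twice continuously differentiable and its residuum is ξ_{A_f}(x) = f″(x)/f′(x) for all x ∈ I. -/

import Mathlib

open Filter Topology

lemma finv_facts (I : Set ℝ) (hIopen : IsOpen I) (f : ℝ → ℝ)
    (hfC : ContDiffOn ℝ 2 f I) (hf' : ∀ x ∈ I, deriv f x ≠ 0)
    (finv : ℝ → ℝ) (hfinv : ∀ x ∈ I, finv (f x) = x) (w : ℝ) (hw : w ∈ I) :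
    ContDiffAt ℝ 2 finv (f w) ∧ (∀ᶠ z in 𝓝 (f w), f (finv z) = z ∧ finv z ∈ I) := by
  have hcdw : ContDiffAt ℝ 2 f w := hfC.contDiffAt (hIopen.mem_nhds hw)
  have hn : (2 : WithTop ℕ∞) ≠ 0 := by norm_num
  have hdw : HasDerivAt f (deriv f w) w := (hcdw.differentiableAt hn).hasDerivAt
  have hfd := hdw.hasFDerivAt_equiv (hf' w hw)
  have hstrict := hcdw.hasStrictFDerivAt' hfd hn
  have hg : ∀ᶠ y in 𝓝 w, finv (f y) = y :=
    Filter.eventually_of_mem (hIopen.mem_nhds hw) fun y hy => hfinv y hy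
  have heq := hstrict.localInverse_unique hg
  have hC : ContDiffAt ℝ 2 (HasStrictFDerivAt.localInverse f _ w hstrict) (f w) :=
    hcdw.to_localInverse hfd hn
  constructor
  · exact hC.congr_of_eventuallyEq heq
  · filter_upwards [heq, hstrict.eventually_right_inverse,
      hstrict.localInverse_tendsto.eventually (hIopen.eventually_mem hw)] with z h1 h2 h3
    exact ⟨by rw [h1]; exact h2, by rw [h1]; exact h3⟩

lemma finv_deriv_at (I : Set ℝ) (hIopen : IsOpen I) (f : ℝ → ℝ)
    (hfC : ContDiffOn ℝ 2 f I) (hf' : ∀ x ∈ I, deriv f x ≠ 0)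
    (finv : ℝ → ℝ) (hfinv : ∀ x ∈ I, finv (f x) = x) (w : ℝ) (hw : w ∈ I) :
    HasStrictDerivAt finv (deriv f w)⁻¹ (f w) := by
  have hcdw : ContDiffAt ℝ 2 f w := hfC.contDiffAt (hIopen.mem_nhds hw)
  have hn : (2 : WithTop ℕ∞) ≠ 0 := by norm_num
  have hg : ∀ᶠ y in 𝓝 w, finv (f y) = y :=
    Filter.eventually_of_mem (hIopen.mem_nhds hw) fun y hy => hfinv y hy
  exact (hcdw.hasStrictDerivAt hn).to_local_left_inverse (hf' w hw) hg

/-- the quasiarithmetic mean A_f is twice continuously differentiable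
and its residuum is ξ_{A_f}(x) = f″(x)/f′(x). -/
theorem residuum_quasiarithmetic (p : ℕ) (hp : 2 ≤ p) (I : Set ℝ) (hIopen : IsOpen I)
    (hIconn : I.OrdConnected) (f : ℝ → ℝ)
    (hfC : ContDiffOn ℝ 2 f I)
    (hmono : StrictMonoOn f I ∨ StrictAntiOn f I)
    (hf' : ∀ x ∈ I, deriv f x ≠ 0)
    (finv : ℝ → ℝ) (hfinv : ∀ x ∈ I, finv (f x) = x) :
    ContDiffOn ℝ 2 (fun y : Fin p → ℝ => finv ((∑ i, f (y i)) / p))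
      {y : Fin p → ℝ | ∀ i, y i ∈ I} ∧
    ∀ x ∈ I,
      -(p : ℝ)^2 * fderiv ℝ (fun z : Fin p → ℝ => fderiv ℝ
          (fun y : Fin p → ℝ => finv ((∑ i, f (y i)) / p)) z (Pi.single (⟨1, hp⟩ : Fin p) 1))
        (fun _ => x) (Pi.single (⟨0, by omega⟩ : Fin p) 1)
      = deriv (deriv f) x / deriv f x := by
  have hn : (2 : WithTop ℕ∞) ≠ 0 := by norm_num
  have hp0 : (p : ℝ) ≠ 0 := by positivity
  set U : Set (Fin p → ℝ) := {y : Fin p → ℝ | ∀ i, y i ∈ I} with hU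
  have hUopen : IsOpen U := by
    have : U = ⋂ i, (fun y : Fin p → ℝ => y i) ⁻¹' I := by
      ext y; simp [hU, Set.mem_iInter]
    rw [this]
    exact isOpen_iInter_of_finite fun i => hIopen.preimage (continuous_apply i)
  have hconv : Convex ℝ (f '' I) := by
    have hIconv : Convex ℝ I := convex_iff_ordConnected.mpr hIconn
    exact convex_iff_ordConnected.mpr
      ((hIconv.isPreconnected.image f hfC.continuousOn).ordConnected)
  have hmean : ∀ y ∈ U, (∑ i, f (y i)) / (p : ℝ) ∈ f '' I := by
    intro y hy
    have h1 : ∑ i : Fin p, ((p : ℝ)⁻¹) • f (y i) ∈ f '' I := by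
      refine hconv.sum_mem (fun i _ => by positivity) ?_ (fun i _ => ⟨y i, hy i, rfl⟩)
      simp [Finset.card_univ, hp0]
    have h2 : (∑ i, f (y i)) / (p : ℝ) = ∑ i : Fin p, ((p : ℝ)⁻¹) • f (y i) := by
      rw [div_eq_inv_mul, Finset.mul_sum]; simp
    rw [h2]; exact h1
  have hSdiff : ∀ y ∈ U, ContDiffAt ℝ 2 (fun y : Fin p → ℝ => (∑ i, f (y i)) / (p:ℝ)) y := by
    intro y hy
    refine ContDiffAt.div_const ?_ _
    exact ContDiffAt.sum fun i _ =>
      (hfC.contDiffAt (hIopen.mem_nhds (hy i))).comp y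
        ((ContinuousLinearMap.proj (R := ℝ) (φ := fun _ : Fin p => ℝ) i).contDiff.contDiffAt)
  have hsmooth : ContDiffOn ℝ 2 (fun y : Fin p → ℝ => finv ((∑ i, f (y i)) / p)) U := by
    intro y hy
    obtain ⟨w, hw, hwe⟩ := hmean y hy
    have hfinvC : ContDiffAt ℝ 2 finv ((∑ i, f (y i)) / (p:ℝ)) := by
      rw [← hwe]; exact (finv_facts I hIopen f hfC hf' finv hfinv w hw).1
    exact (hfinvC.comp y (hSdiff y hy)).contDiffWithinAt
  refine ⟨hsmooth, ?_⟩
  intro x hx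
  set i₁ : Fin p := ⟨1, hp⟩ with hi₁
  set i₀ : Fin p := ⟨0, by omega⟩ with hi₀
  set c : Fin p → ℝ := fun _ => x with hc
  have hxc : c ∈ U := fun i => hx
  have a0 : deriv f x ≠ 0 := hf' x hx
  have hne : i₀ ≠ i₁ := by simp [hi₀, hi₁, Fin.ext_iff]
  -- derivative of the average S
  have hS : ∀ z ∈ U, HasFDerivAt (fun y : Fin p → ℝ => (∑ i, f (y i)) / (p:ℝ))
      ((p:ℝ)⁻¹ • (∑ i, (deriv f (z i)) •
        ContinuousLinearMap.proj (R := ℝ) (φ := fun _ : Fin p => ℝ) i)) z := by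
    intro z hz
    have hsum : HasFDerivAt (fun y : Fin p → ℝ => ∑ i, f (y i))
        (∑ i, (deriv f (z i)) •
          ContinuousLinearMap.proj (R := ℝ) (φ := fun _ : Fin p => ℝ) i) z := by
      refine HasFDerivAt.fun_sum fun i _ => ?_
      have hd : HasDerivAt f (deriv f (z i)) (z i) :=
        ((hfC.contDiffAt (hIopen.mem_nhds (hz i))).differentiableAt hn).hasDerivAt
      exact hd.comp_hasFDerivAt z
        (ContinuousLinearMap.proj (R := ℝ) (φ := fun _ : Fin p => ℝ) i).hasFDerivAt
    simpa [div_eq_inv_mul] using hsum.fun_const_smul ((p:ℝ)⁻¹)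
  -- explicit formula for the inner fderiv on U
  have hG : ∀ z ∈ U, fderiv ℝ (fun y : Fin p → ℝ => finv ((∑ i, f (y i)) / p)) z
      (Pi.single i₁ 1) = deriv finv ((∑ i, f (z i)) / (p:ℝ)) * (deriv f (z i₁) / p) := by
    intro z hz
    obtain ⟨w, hw, hwe⟩ := hmean z hz
    have hdinv : HasDerivAt finv (deriv finv ((∑ i, f (z i)) / (p:ℝ)))
        ((∑ i, f (z i)) / (p:ℝ)) := by
      have h3 := (finv_facts I hIopen f hfC hf' finv hfinv w hw).1.differentiableAt hn
      rw [hwe] at h3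
      exact h3.hasDerivAt
    have hF : HasFDerivAt (fun y : Fin p → ℝ => finv ((∑ i, f (y i)) / (p:ℝ)))
        (deriv finv ((∑ i, f (z i)) / (p:ℝ)) •
          ((p:ℝ)⁻¹ • (∑ i, (deriv f (z i)) •
            ContinuousLinearMap.proj (R := ℝ) (φ := fun _ : Fin p => ℝ) i))) z :=
      hdinv.comp_hasFDerivAt z (hS z hz)
    rw [hF.fderiv]
    simp [ContinuousLinearMap.smul_apply, Pi.single_apply, Finset.sum_ite_eq',
      mul_comm, mul_div_assoc, div_eq_inv_mul]
  -- second derivative of f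
  have hb : HasDerivAt (deriv f) (deriv (deriv f) x) x := by
    have h1 : ContDiffOn ℝ 1 (deriv f) I := hfC.deriv_of_isOpen hIopen (by norm_num)
    exact ((h1.contDiffAt (hIopen.mem_nhds hx)).differentiableAt one_ne_zero).hasDerivAt
  have hfx : finv (f x) = x := hfinv x hx
  -- second derivative of finv at f x
  have hkey : ∀ w ∈ I, deriv finv (f w) = (deriv f w)⁻¹ := fun w hw =>
    (finv_deriv_at I hIopen f hfC hf' finv hfinv w hw).hasDerivAt.deriv
  have hev : deriv finv =ᶠ[𝓝 (f x)] fun z => (deriv f (finv z))⁻¹ := by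
    filter_upwards [(finv_facts I hIopen f hfC hf' finv hfinv x hx).2] with z hz
    conv_lhs => rw [← hz.1]
    exact hkey _ hz.2
  have hinv2 : HasDerivAt (fun z => (deriv f (finv z))⁻¹)
      (-(deriv (deriv f) x * (deriv f x)⁻¹) / (deriv f x)^2) (f x) := by
    have hbf : HasDerivAt (deriv f) (deriv (deriv f) x) (finv (f x)) := by
      rw [hfx]; exact hb
    have hfinvd : HasDerivAt finv (deriv f x)⁻¹ (f x) :=
      (finv_deriv_at I hIopen f hfC hf' finv hfinv x hx).hasDerivAt
    have hcomp := hbf.comp (f x) hfinvd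
    have h4 := hcomp.inv (by simp only [Function.comp_apply, hfx]; exact a0)
    simpa [Function.comp_def, hfx, Pi.inv_def] using h4
  have hA' : HasDerivAt (deriv finv)
      (-(deriv (deriv f) x * (deriv f x)⁻¹) / (deriv f x)^2) (f x) :=
    hinv2.congr_of_eventuallyEq hev
  -- S c = f x
  have hsc : (∑ i : Fin p, f (c i)) / (p:ℝ) = f x := by
    simp only [hc]
    rw [Finset.sum_const, Finset.card_univ, Fintype.card_fin, nsmul_eq_mul,
      mul_div_cancel_left₀ _ hp0]
  -- fderiv of the two factors at c
  have hA : HasFDerivAt (fun z : Fin p → ℝ => deriv finv ((∑ i, f (z i)) / (p:ℝ)))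
      ((-(deriv (deriv f) x * (deriv f x)⁻¹) / (deriv f x)^2) •
        ((p:ℝ)⁻¹ • (∑ i, (deriv f (c i)) •
          ContinuousLinearMap.proj (R := ℝ) (φ := fun _ : Fin p => ℝ) i))) c :=
    HasDerivAt.comp_hasFDerivAt_of_eq c hA' (hS c hxc) hsc.symm
  have hB : HasFDerivAt (fun z : Fin p → ℝ => deriv f (z i₁) / (p:ℝ))
      ((p:ℝ)⁻¹ • ((deriv (deriv f) x) •
        ContinuousLinearMap.proj (R := ℝ) (φ := fun _ : Fin p => ℝ) i₁)) c := by
    have hbc : HasDerivAt (deriv f) (deriv (deriv f) x) (c i₁) := hb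
    have := (hbc.comp_hasFDerivAt c
      (ContinuousLinearMap.proj (R := ℝ) (φ := fun _ : Fin p => ℝ) i₁).hasFDerivAt).fun_const_smul
      ((p:ℝ)⁻¹)
    simpa [div_eq_inv_mul] using this
  have hH := hA.fun_mul hB
  have heq2 : (fun z : Fin p → ℝ => fderiv ℝ
      (fun y : Fin p → ℝ => finv ((∑ i, f (y i)) / p)) z (Pi.single i₁ 1)) =ᶠ[𝓝 c]
      (fun z : Fin p → ℝ =>
        deriv finv ((∑ i, f (z i)) / (p:ℝ)) * (deriv f (z i₁) / p)) := by
    filter_upwards [hUopen.mem_nhds hxc] with z hz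
    exact hG z hz
  rw [heq2.fderiv_eq, hH.fderiv]
  have hs0 : (Pi.single i₀ 1 : Fin p → ℝ) i₁ = 0 := Pi.single_eq_of_ne (Ne.symm hne) 1
  simp only [ContinuousLinearMap.add_apply, ContinuousLinearMap.smul_apply,
    ContinuousLinearMap.coe_sum', Finset.sum_apply, ContinuousLinearMap.proj_apply,
    smul_eq_mul, hs0, mul_zero, Pi.single_apply, mul_ite, mul_one, Finset.sum_ite_eq',
    Finset.mem_univ, if_true, hc]
  field_simp
  ring
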